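/- arXiv:2012.08897 — 7 statements merged into one kernel-verified Lean document; each statement's English description precedes it below -/
import Mathlib

section
/- An undirected graph G is the Fitch graph of some 0/1-edge-labeled rooted tree if and only if G is a complete multipartite graph, which in turn holds if and only if G does not contain the disjoint union K₂ + K₁ (an edge plus an isolated vertex) as an induced subgraph. -/
/-- A rooted tree, modeled by its ancestor partial order `le` (x `le` y means
y is an ancestor of x, i.e., y lies on the path from the root to x), together
with last common ancestors `lca`.  The `chain` condition states that the set
of ancestors of any vertex is totally ordered, as in a rooted tree. -/
structure TreeOrder (V : Type) where
  le : V → V → Prop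
  le_refl : ∀ x, le x x
  le_antisymm : ∀ x y, le x y → le y x → x = y
  le_trans : ∀ x y z, le x y → le y z → le x z
  chain : ∀ x y z, le x y → le x z → le y z ∨ le z y
  lca : V → V → V
  le_lca_left : ∀ x y, le x (lca x y)
  le_lca_right : ∀ x y, le y (lca x y)
  lca_le : ∀ x y z, le x z → le y z → le (lca x y) z

/-- A leaf is a `⪯`-minimal vertex. -/
def TreeOrder.IsLeaf {V : Type} (t : TreeOrder V) (x : V) : Prop :=
  ∀ y, t.le y x → y = x

/-- A time map: strict descendants get strictly smaller times. -/
def TreeOrder.IsTimeMap {V : Type} (t : TreeOrder V) (tau : V → ℝ) : Prop :=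
  ∀ x y, t.le x y → x ≠ y → tau x < tau y

/-- `covers u v`: `(u,v)` is an edge of the tree, i.e., `v` is a child of `u`. -/
def TreeOrder.covers {V : Type} (t : TreeOrder V) (u v : V) : Prop :=
  t.le v u ∧ v ≠ u ∧ ∀ w, t.le v w → t.le w u → w = v ∨ w = u

/-- The edge `(u,v)` (with child `v`) lies on the unique path connecting `a` and `b`. -/
def TreeOrder.onPath {V : Type} (t : TreeOrder V) (a b u v : V) : Prop :=
  (t.le a v ∨ t.le b v) ∧ t.le u (t.lca a b)

/-- Fitch adjacency for a 0/1-edge-labeled tree: `lab u v` means the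
edge from `u` to its child `v` is labeled 1; two leaves are adjacent iff the
path connecting them contains a 1-edge. -/
def fitchAdj {V : Type} (t : TreeOrder V) (lab : V → V → Prop) (a b : V) : Prop :=
  a ≠ b ∧ ∃ u v, t.covers u v ∧ lab u v ∧ t.onPath a b u v

/-- `G` is the Fitch graph of some 0/1-edge-labeled rooted tree. -/
def IsFitchGraph {L : Type} (G : SimpleGraph L) : Prop :=
  ∃ (V : Type) (t : TreeOrder V) (lab : V → V → Prop) (f : L → V),
    Function.Injective f ∧ (∀ x, t.IsLeaf (f x)) ∧ (∀ v, t.IsLeaf v → ∃ x, f x = v) ∧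
    ∀ a b, G.Adj a b ↔ fitchAdj t lab (f a) (f b)

/-- A graph is complete multipartite: there is an equivalence relation
(whose classes are the independent sets) such that two vertices are adjacent
iff they are inequivalent. -/
def IsCompleteMultipartite {L : Type} (G : SimpleGraph L) : Prop :=
  ∃ r : L → L → Prop, Equivalence r ∧ ∀ a b, G.Adj a b ↔ ¬ r a b

/-- `G` contains no induced `K₂ + K₁` (an edge plus an isolated vertex). -/
def NoInducedK2K1 {L : Type} (G : SimpleGraph L) : Prop :=
  ¬ ∃ x y z : L, x ≠ y ∧ x ≠ z ∧ y ≠ z ∧ G.Adj x y ∧ ¬ G.Adj x z ∧ ¬ G.Adj y z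

/-!
Non-adjacency in a Fitch graph is transitive: if a 1-edge `(u, v)` lies on the path between
`a` and `b`, say with `a` below `v`, and it lies neither on the path `a – c` nor on `c – b`,
then first `c` and then `b` lie below `v`, so `lca a b` lies below `v`, which is absurd.
A graph with transitive non-adjacency is complete multipartite, its parts being the
non-adjacency classes, and a complete multipartite graph has no induced `K₂ + K₁`.
Conversely, a complete multipartite graph is the Fitch graph of the tree of height two that
hangs each part below its own child of the root and labels exactly the edges at the root by `1`.
-/

namespace TreeOrder

variable {V : Type} (t : TreeOrder V)

theorem lca_comm (x y : V) : t.lca x y = t.lca y x :=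
  t.le_antisymm _ _ (t.lca_le x y _ (t.le_lca_right y x) (t.le_lca_left y x))
    (t.lca_le y x _ (t.le_lca_right x y) (t.le_lca_left x y))

theorem onPath_comm {a b u v : V} (h : t.onPath a b u v) : t.onPath b a u v :=
  ⟨h.1.symm, t.lca_comm a b ▸ h.2⟩

/-- If the edge `(u, v)` hangs above `a` but not above `lca a b`, then the path from `a` up to
`lca a b` must pass through it, so `b` lies below `v` as well. -/
theorem le_of_covers_of_not_le_lca {u v a b : V} (huv : t.covers u v) (hav : t.le a v)
    (hu : ¬ t.le u (t.lca a b)) : t.le b v := by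
  obtain ⟨hvu, hvne, hbetween⟩ := huv
  have hlca_le_u : t.le (t.lca a b) u :=
    (t.chain a u _ (t.le_trans _ _ _ hav hvu) (t.le_lca_left a b)).resolve_left hu
  rcases t.chain a v (t.lca a b) hav (t.le_lca_left a b) with hvl | hlv
  · rcases hbetween _ hvl hlca_le_u with heq | heq
    · exact heq ▸ t.le_lca_right a b
    · exact absurd (heq ▸ t.le_refl u) hu
  · exact t.le_trans _ _ _ (t.le_lca_right a b) hlv

end TreeOrder

section Fitch

variable {V : Type} {t : TreeOrder V} {lab : V → V → Prop}

theorem fitchAdj_comm {a b : V} (h : fitchAdj t lab a b) : fitchAdj t lab b a :=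
  ⟨h.1.symm, h.2.imp fun _ ↦ .imp fun _ h ↦ ⟨h.1, h.2.1, t.onPath_comm h.2.2⟩⟩

theorem fitchAdj_left_or_right_of_le {a b c u v : V} (huv : t.covers u v) (hlab : lab u v)
    (hav : t.le a v) (hu : t.le u (t.lca a b)) (hca : c ≠ a) (hcb : c ≠ b) :
    fitchAdj t lab a c ∨ fitchAdj t lab b c := by
  by_cases hac : t.le u (t.lca a c)
  · exact .inl ⟨hca.symm, u, v, huv, hlab, .inl hav, hac⟩
  have hcv := t.le_of_covers_of_not_le_lca huv hav hac
  by_cases hcb' : t.le u (t.lca c b)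
  · exact .inr (fitchAdj_comm ⟨hcb, u, v, huv, hlab, .inl hcv, hcb'⟩)
  have hbv := t.le_of_covers_of_not_le_lca huv hcv hcb'
  exact absurd (t.le_antisymm _ _ huv.1
    (t.le_trans _ _ _ hu (t.lca_le a b v hav hbv))) huv.2.1

theorem fitchAdj_left_or_right {a b c : V} (hab : fitchAdj t lab a b) (hca : c ≠ a)
    (hcb : c ≠ b) : fitchAdj t lab a c ∨ fitchAdj t lab b c := by
  obtain ⟨-, u, v, huv, hlab, hav | hbv, hu⟩ := hab
  · exact fitchAdj_left_or_right_of_le huv hlab hav hu hca hcb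
  · exact (fitchAdj_left_or_right_of_le huv hlab hbv (t.lca_comm a b ▸ hu) hcb hca).symm

end Fitch

namespace TreeOrder

def ofSubsingleton (V : Type) [Subsingleton V] : TreeOrder V where
  le _ _ := True
  le_refl _ := trivial
  le_antisymm x y _ _ := Subsingleton.elim x y
  le_trans _ _ _ _ _ := trivial
  chain _ _ _ _ _ := .inl trivial
  lca x _ := x
  le_lca_left _ _ := trivial
  le_lca_right _ _ := trivial
  lca_le _ _ _ _ _ := trivial

variable {L C : Type} (p : L → C)

/-- The tree of height two with root `none`, one child `some (inr c)` of the root for each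
`c : C`, and a leaf `some (inl x)` below `some (inr (p x))` for each `x : L`. -/
def TwoLevelLE : Option (L ⊕ C) → Option (L ⊕ C) → Prop
  | _, none => True
  | some (.inl x), some (.inl y) => x = y
  | some (.inl x), some (.inr c) => p x = c
  | some (.inr c), some (.inr d) => c = d
  | _, _ => False

open Classical in
noncomputable def twoLevelLca : Option (L ⊕ C) → Option (L ⊕ C) → Option (L ⊕ C)
  | some (.inl x), some (.inl y) =>
      if x = y then some (.inl x) else if p x = p y then some (.inr (p x)) else none
  | some (.inl x), some (.inr c) => if p x = c then some (.inr c) else none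
  | some (.inr c), some (.inl y) => if p y = c then some (.inr c) else none
  | some (.inr c), some (.inr d) => if c = d then some (.inr c) else none
  | _, _ => none

noncomputable def twoLevel : TreeOrder (Option (L ⊕ C)) where
  le := TwoLevelLE p
  le_refl := by rintro (_ | _ | _) <;> simp [TwoLevelLE]
  le_antisymm := by
    rintro (_ | _ | _) (_ | _ | _) <;> grind [TwoLevelLE]
  le_trans := by
    rintro (_ | _ | _) (_ | _ | _) (_ | _ | _) <;> grind [TwoLevelLE]
  chain := by
    rintro (_ | _ | _) (_ | _ | _) (_ | _ | _) <;> grind [TwoLevelLE]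
  lca := twoLevelLca p
  le_lca_left := by
    rintro (_ | _ | _) (_ | _ | _) <;> grind [TwoLevelLE, twoLevelLca]
  le_lca_right := by
    rintro (_ | _ | _) (_ | _ | _) <;> grind [TwoLevelLE, twoLevelLca]
  lca_le := by
    rintro (_ | _ | _) (_ | _ | _) (_ | _ | _) <;> grind [TwoLevelLE, twoLevelLca]

theorem twoLevel_none_le_iff (v : Option (L ⊕ C)) : (twoLevel p).le none v ↔ v = none := by
  rcases v with _ | _ | _ <;> simp [twoLevel, TwoLevelLE]

theorem twoLevel_covers_none (c : C) : (twoLevel p).covers none (some (.inr c)) := by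
  refine ⟨trivial, by simp, ?_⟩
  rintro (_ | _ | _) <;> simp [twoLevel, TwoLevelLE, eq_comm]

theorem twoLevel_leaf_le_class (x : L) : (twoLevel p).le (some (.inl x)) (some (.inr (p x))) :=
  rfl

theorem twoLevel_lca_leaves_eq_none_iff (x y : L) :
    (twoLevel p).lca (some (.inl x)) (some (.inl y)) = none ↔ p x ≠ p y := by
  simp only [twoLevel, twoLevelLca]
  split_ifs <;> simp_all

theorem twoLevel_isLeaf_iff [Nonempty L] (hp : Function.Surjective p) (v : Option (L ⊕ C)) :
    (twoLevel p).IsLeaf v ↔ ∃ x, v = some (.inl x) := by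
  constructor
  · intro hv
    rcases v with _ | x | c
    · obtain ⟨x⟩ := ‹Nonempty L›
      cases hv (some (.inl x)) trivial
    · exact ⟨x, rfl⟩
    · obtain ⟨x, rfl⟩ := hp c
      cases hv _ (twoLevel_leaf_le_class p x)
  · rintro ⟨x, rfl⟩ (_ | _ | _) h <;> simp_all [twoLevel, TwoLevelLE]

theorem fitchAdj_twoLevel_iff (x y : L) :
    fitchAdj (twoLevel p) (fun u _ ↦ u = none) (some (.inl x)) (some (.inl y)) ↔
      p x ≠ p y := by
  constructor
  · rintro ⟨-, _, _, -, rfl, -, hroot⟩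
    exact (twoLevel_lca_leaves_eq_none_iff p x y).1 ((twoLevel_none_le_iff p _).1 hroot)
  · intro h
    refine ⟨by simpa using ne_of_apply_ne p h, none, some (.inr (p x)), twoLevel_covers_none p _,
      rfl, .inl (twoLevel_leaf_le_class p x), ?_⟩
    rw [(twoLevel_lca_leaves_eq_none_iff p x y).2 h]
    exact (twoLevel p).le_refl none

end TreeOrder

section Graph

variable {L : Type} {G : SimpleGraph L}

theorem IsFitchGraph.noInducedK2K1 (h : IsFitchGraph G) : NoInducedK2K1 G := by
  obtain ⟨_, _, _, f, hf, -, -, hadj⟩ := h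
  rintro ⟨x, y, z, -, hxz, hyz, hxy, hnxz, hnyz⟩
  rcases fitchAdj_left_or_right ((hadj x y).1 hxy) (hf.ne hxz.symm) (hf.ne hyz.symm) with h | h
  · exact hnxz ((hadj x z).2 h)
  · exact hnyz ((hadj y z).2 h)

theorem IsCompleteMultipartite.noInducedK2K1 (h : IsCompleteMultipartite G) :
    NoInducedK2K1 G := by
  obtain ⟨r, hr, hadj⟩ := h
  rintro ⟨x, y, z, -, -, -, hxy, hnxz, hnyz⟩
  simp only [hadj, not_not] at hxy hnxz hnyz
  exact hxy (hr.trans hnxz (hr.symm hnyz))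

theorem NoInducedK2K1.isCompleteMultipartite (h : NoInducedK2K1 G) :
    IsCompleteMultipartite G := by
  refine ⟨fun a b ↦ ¬ G.Adj a b, ⟨fun _ ↦ G.irrefl, fun h h' ↦ h h'.symm, ?_⟩,
    fun _ _ ↦ not_not.symm⟩
  intro a b c hab hbc hac
  obtain rfl | hba := eq_or_ne b a
  · exact hbc hac
  obtain rfl | hbc' := eq_or_ne b c
  · exact hab hac
  exact h ⟨a, c, b, hac.ne, hba.symm, hbc'.symm, hac, hab, fun h ↦ hbc h.symm⟩

theorem isFitchGraph_of_subsingleton [Subsingleton L] : IsFitchGraph G :=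
  ⟨L, .ofSubsingleton L, fun _ _ ↦ True, id, Function.injective_id,
    fun _ _ _ ↦ Subsingleton.elim _ _, fun v _ ↦ ⟨v, rfl⟩,
    fun a b ↦ iff_of_false (fun h ↦ h.ne (Subsingleton.elim a b))
      (fun h ↦ h.1 (Subsingleton.elim a b))⟩

theorem isFitchGraph_of_adj_iff {C : Type} [Nonempty L] (p : L → C)
    (hp : Function.Surjective p) (hadj : ∀ a b, G.Adj a b ↔ p a ≠ p b) : IsFitchGraph G :=
  ⟨_, .twoLevel p, fun u _ ↦ u = none, fun x ↦ some (.inl x),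
    fun _ _ h ↦ by simpa using h, fun x ↦ (TreeOrder.twoLevel_isLeaf_iff p hp _).2 ⟨x, rfl⟩,
    fun v hv ↦ ((TreeOrder.twoLevel_isLeaf_iff p hp v).1 hv).imp fun _ h ↦ h.symm,
    fun a b ↦ (hadj a b).trans (TreeOrder.fitchAdj_twoLevel_iff p a b).symm⟩

theorem IsCompleteMultipartite.isFitchGraph (h : IsCompleteMultipartite G) : IsFitchGraph G := by
  obtain ⟨r, hr, hadj⟩ := h
  cases isEmpty_or_nonempty L
  · exact isFitchGraph_of_subsingleton
  let s : Setoid L := ⟨r, hr⟩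
  exact isFitchGraph_of_adj_iff (Quotient.mk s) Quotient.mk_surjective
    fun a b ↦ (hadj a b).trans (not_congr (Quotient.eq (r := s)).symm)

end Graph

theorem stmt3_general {L : Type} (G : SimpleGraph L) :
    (IsFitchGraph G ↔ IsCompleteMultipartite G) ∧
    (IsCompleteMultipartite G ↔ NoInducedK2K1 G) :=
  ⟨⟨fun h ↦ h.noInducedK2K1.isCompleteMultipartite, (·.isFitchGraph)⟩,
    ⟨(·.noInducedK2K1), (·.isCompleteMultipartite)⟩⟩

/-- A graph is the Fitch graph of some 0/1-edge-labeled rooted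
tree iff it is complete multipartite, iff it has no induced `K₂ + K₁`. -/
theorem stmt3 {L : Type} [Fintype L] (G : SimpleGraph L) :
    (IsFitchGraph G ↔ IsCompleteMultipartite G) ∧
    (IsCompleteMultipartite G ↔ NoInducedK2K1 G) :=
  stmt3_general G
end

section
/- If (G, σ) is an LDT graph and 𝒯 = (T, S, σ, τ_T, τ_S) is any μ-free scenario explaining (G, σ), then the species tree S displays every triple in 𝔖(G, σ); in particular, the triple set 𝔖(G, σ) is compatible. -/
/-- The tree displays the rooted triple `ab|c`. -/
def TreeOrder.displays {V : Type} (t : TreeOrder V) (a b c : V) : Prop :=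
  t.le (t.lca a b) (t.lca a c) ∧ t.lca a b ≠ t.lca a c ∧ t.lca a c = t.lca b c

/-- A μ-free scenario: planted trees `T`, `S`, a map `σ` sending leaves of `T`
to leaves of `S`, and time maps `τT`, `τS` with `τT x = τS (σ x)` for leaves. -/
structure MuFreeScenario (VT VS : Type) where
  T : TreeOrder VT
  S : TreeOrder VS
  sigma : VT → VS
  sigma_leaf : ∀ x, T.IsLeaf x → S.IsLeaf (sigma x)
  tauT : VT → ℝ
  tauS : VS → ℝ
  timeT : T.IsTimeMap tauT
  timeS : S.IsTimeMap tauS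
  tau_leaf : ∀ x, T.IsLeaf x → tauT x = tauS (sigma x)

/-- The adjacency of the LDT graph of a μ-free scenario (on the leaves of `T`). -/
def MuFreeScenario.ldtAdj {VT VS : Type} (sc : MuFreeScenario VT VS) (a b : VT) : Prop :=
  a ≠ b ∧ sc.tauT (sc.T.lca a b) < sc.tauS (sc.S.lca (sc.sigma a) (sc.sigma b))

/-- The μ-free scenario `sc` explains the vertex-colored graph `(G, σ)`:
`fL` identifies the vertices of `G` with the leaves of `T`, `fM` identifies
the colors with leaves of `S` compatibly with the colorings, and the edges
of `G` are exactly the later-divergence-time pairs. -/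
def ExplainsLDT {L M VT VS : Type} (sc : MuFreeScenario VT VS)
    (G : SimpleGraph L) (sigma : L → M) (fL : L → VT) (fM : M → VS) : Prop :=
  Function.Injective fL ∧ Function.Injective fM ∧
  (∀ x, sc.T.IsLeaf (fL x)) ∧ (∀ v, sc.T.IsLeaf v → ∃ x, fL x = v) ∧
  (∀ m, sc.S.IsLeaf (fM m)) ∧
  (∀ x, sc.sigma (fL x) = fM (sigma x)) ∧
  (∀ a b, G.Adj a b ↔ sc.ldtAdj (fL a) (fL b))

/-- `(G, σ)` is an LDT graph: it is explained by some μ-free scenario. -/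
def IsLDTGraph {L M : Type} (G : SimpleGraph L) (sigma : L → M) : Prop :=
  ∃ (VT VS : Type) (sc : MuFreeScenario VT VS) (fL : L → VT) (fM : M → VS),
    ExplainsLDT sc G sigma fL fM

/-- The color triple set 𝔖(G, σ): all `(A, B, C)` (read as the rooted triple
`AB|C` on colors) such that there are vertices `x, y, z` with pairwise distinct
colors `A = σ x`, `B = σ y`, `C = σ z`, `xz, yz ∈ E` and `xy ∉ E`. -/
def tripleSetS {L M : Type} (G : SimpleGraph L) (sigma : L → M) : Set (M × M × M) :=
  {p | ∃ x y z : L, sigma x = p.1 ∧ sigma y = p.2.1 ∧ sigma z = p.2.2 ∧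
    p.1 ≠ p.2.1 ∧ p.1 ≠ p.2.2 ∧ p.2.1 ≠ p.2.2 ∧
    G.Adj x z ∧ G.Adj y z ∧ ¬ G.Adj x y}

lemma TreeOrder.lca_comm_s5 {V : Type} (t : TreeOrder V) (a b : V) :
    t.lca a b = t.lca b a :=
  t.le_antisymm _ _
    (t.lca_le a b _ (t.le_lca_right b a) (t.le_lca_left b a))
    (t.lca_le b a _ (t.le_lca_right a b) (t.le_lca_left a b))

lemma TreeOrder.time_mono {V : Type} (t : TreeOrder V) {tau : V → ℝ}
    (h : t.IsTimeMap tau) {x y : V} (hxy : t.le x y) : tau x ≤ tau y := by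
  by_cases he : x = y
  · exact le_of_eq (congrArg tau he)
  · exact (h x y hxy he).le

/-- If `lca a b` is a strict descendant of `lca b c`, the tree displays `ab|c`. -/
lemma TreeOrder.displays_of_right {V : Type} (t : TreeOrder V) (a b c : V)
    (h1 : t.le (t.lca a b) (t.lca b c)) (h2 : t.lca a b ≠ t.lca b c) :
    t.displays a b c := by
  have hau : t.le a (t.lca a b) := t.le_lca_left a b
  have hbu : t.le b (t.lca a b) := t.le_lca_right a b
  have hav : t.le a (t.lca b c) := t.le_trans _ _ _ hau h1
  have hcv : t.le c (t.lca b c) := t.le_lca_right b c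
  have hacv : t.le (t.lca a c) (t.lca b c) := t.lca_le _ _ _ hav hcv
  have hcomp := t.chain a (t.lca a b) (t.lca a c) hau (t.le_lca_left a c)
  have hu_ac : t.le (t.lca a b) (t.lca a c) := by
    rcases hcomp with h | h
    · exact h
    · exfalso; apply h2
      have hcu : t.le c (t.lca a b) := t.le_trans _ _ _ (t.le_lca_right a c) h
      exact t.le_antisymm _ _ h1 (t.lca_le _ _ _ hbu hcu)
  have hne : t.lca a b ≠ t.lca a c := by
    intro he
    apply h2
    have hcu : t.le c (t.lca a b) := he ▸ t.le_lca_right a c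
    exact t.le_antisymm _ _ h1 (t.lca_le _ _ _ hbu hcu)
  have heq : t.lca a c = t.lca b c := by
    apply t.le_antisymm _ _ hacv
    exact t.lca_le _ _ _ (t.le_trans _ _ _ hbu hu_ac) (t.le_lca_right a c)
  exact ⟨hu_ac, hne, heq⟩

lemma TreeOrder.displays_symm {V : Type} (t : TreeOrder V) {a b c : V}
    (h : t.displays a b c) : t.displays b a c := by
  obtain ⟨h1, h2, h3⟩ := h
  refine ⟨?_, ?_, ?_⟩
  · rw [t.lca_comm_s5 b a, ← h3]; exact h1
  · rw [t.lca_comm_s5 b a, ← h3]; exact h2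
  · rw [← h3]

/-- If `(G, σ)` is an LDT graph and `𝒯` is any μ-free scenario
explaining it, then the species tree `S` displays every triple in 𝔖(G, σ);
in particular 𝔖(G, σ) is compatible. -/
theorem stmt5 {L M VT VS : Type} (G : SimpleGraph L) (sigma : L → M)
    (sc : MuFreeScenario VT VS) (fL : L → VT) (fM : M → VS)
    (h : ExplainsLDT sc G sigma fL fM) :
    (∀ A B C : M, (A, B, C) ∈ tripleSetS G sigma →
        sc.S.displays (fM A) (fM B) (fM C)) ∧
    (∃ (W : Type) (t : TreeOrder W) (g : M → W), Function.Injective g ∧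
        (∀ m, t.IsLeaf (g m)) ∧
        ∀ A B C : M, (A, B, C) ∈ tripleSetS G sigma →
          t.displays (g A) (g B) (g C)) := by
  obtain ⟨hfL, hfM, hleafT, -, hleafS, hsig, hadj⟩ := h
  have main : ∀ A B C : M, (A, B, C) ∈ tripleSetS G sigma →
      sc.S.displays (fM A) (fM B) (fM C) := by
    intro A B C hmem
    obtain ⟨x, y, z, hA, hB, hC, hAB, hAC, hBC, hxz, hyz, hnxy⟩ := hmem
    simp only at hA hB hC hAB hAC hBC
    -- colors of the leaves in S
    have hx : sc.sigma (fL x) = fM A := by rw [hsig x, hA]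
    have hy : sc.sigma (fL y) = fM B := by rw [hsig y, hB]
    have hz : sc.sigma (fL z) = fM C := by rw [hsig z, hC]
    -- edge conditions
    have exz := (hadj x z).1 hxz
    have eyz := (hadj y z).1 hyz
    rw [MuFreeScenario.ldtAdj, hx, hz] at exz
    rw [MuFreeScenario.ldtAdj, hy, hz] at eyz
    -- non-edge condition
    have hxyne : fL x ≠ fL y := by
      intro he
      apply hAB
      rw [← hA, ← hB]
      apply hfM
      rw [← hsig x, ← hsig y, he]
    have hnonedge : sc.tauS (sc.S.lca (fM A) (fM B)) ≤ sc.tauT (sc.T.lca (fL x) (fL y)) := by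
      by_contra hlt
      exact hnxy ((hadj x y).2 ⟨hxyne, by rw [hx, hy]; exact lt_of_not_ge hlt⟩)
    -- compare the two T-lcas above fL z
    have hcompT := sc.T.chain (fL z) (sc.T.lca (fL x) (fL z)) (sc.T.lca (fL y) (fL z))
      (sc.T.le_lca_right _ _) (sc.T.le_lca_right _ _)
    -- helper to conclude from one strict S-side inequality
    have concl : ∀ D E : M, sc.tauS (sc.S.lca (fM A) (fM B)) < sc.tauS (sc.S.lca (fM D) (fM E)) →
        sc.S.le (sc.S.lca (fM A) (fM B)) (sc.S.lca (fM D) (fM E)) ∨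
          ¬ sc.S.le (sc.S.lca (fM D) (fM E)) (sc.S.lca (fM A) (fM B)) := by
      intro D E hlt
      right
      intro hle
      exact absurd (sc.S.time_mono sc.timeS hle) (not_le.2 hlt)
    clear concl
    rcases hcompT with hpq | hqp
    · -- lca(x,z) ≤ lca(y,z), so lca(x,y) ≤ lca(y,z), hence τS(AB) < τS(BC)
      have hxq : sc.T.le (fL x) (sc.T.lca (fL y) (fL z)) :=
        sc.T.le_trans _ _ _ (sc.T.le_lca_left (fL x) (fL z)) hpq
      have hm : sc.T.le (sc.T.lca (fL x) (fL y)) (sc.T.lca (fL y) (fL z)) :=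
        sc.T.lca_le _ _ _ hxq (sc.T.le_lca_left (fL y) (fL z))
      have hlt : sc.tauS (sc.S.lca (fM A) (fM B)) < sc.tauS (sc.S.lca (fM B) (fM C)) :=
        lt_of_le_of_lt (le_trans hnonedge (sc.T.time_mono sc.timeT hm)) eyz.2
      -- S-side: lca(A,B) strictly below lca(B,C)
      have hcompS := sc.S.chain (fM B) (sc.S.lca (fM A) (fM B)) (sc.S.lca (fM B) (fM C))
        (sc.S.le_lca_right _ _) (sc.S.le_lca_left _ _)
      have h1 : sc.S.le (sc.S.lca (fM A) (fM B)) (sc.S.lca (fM B) (fM C)) := by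
        rcases hcompS with h | h
        · exact h
        · exact absurd (sc.S.time_mono sc.timeS h) (not_le.2 hlt)
      have h2 : sc.S.lca (fM A) (fM B) ≠ sc.S.lca (fM B) (fM C) := by
        intro he; rw [he] at hlt; exact lt_irrefl _ hlt
      exact sc.S.displays_of_right _ _ _ h1 h2
    · -- lca(y,z) ≤ lca(x,z), so lca(x,y) ≤ lca(x,z), hence τS(AB) < τS(AC)
      have hyq : sc.T.le (fL y) (sc.T.lca (fL x) (fL z)) :=
        sc.T.le_trans _ _ _ (sc.T.le_lca_left (fL y) (fL z)) hqp
      have hm : sc.T.le (sc.T.lca (fL x) (fL y)) (sc.T.lca (fL x) (fL z)) :=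
        sc.T.lca_le _ _ _ (sc.T.le_lca_left (fL x) (fL z)) hyq
      have hlt : sc.tauS (sc.S.lca (fM A) (fM B)) < sc.tauS (sc.S.lca (fM A) (fM C)) :=
        lt_of_le_of_lt (le_trans hnonedge (sc.T.time_mono sc.timeT hm)) exz.2
      have hcompS := sc.S.chain (fM A) (sc.S.lca (fM A) (fM B)) (sc.S.lca (fM A) (fM C))
        (sc.S.le_lca_left _ _) (sc.S.le_lca_left _ _)
      have h1 : sc.S.le (sc.S.lca (fM A) (fM B)) (sc.S.lca (fM A) (fM C)) := by
        rcases hcompS with h | h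
        · exact h
        · exact absurd (sc.S.time_mono sc.timeS h) (not_le.2 hlt)
      have h2 : sc.S.lca (fM A) (fM B) ≠ sc.S.lca (fM A) (fM C) := by
        intro he; rw [he] at hlt; exact lt_irrefl _ hlt
      have h1' : sc.S.le (sc.S.lca (fM B) (fM A)) (sc.S.lca (fM A) (fM C)) := by
        rw [sc.S.lca_comm_s5 (fM B) (fM A)]; exact h1
      have h2' : sc.S.lca (fM B) (fM A) ≠ sc.S.lca (fM A) (fM C) := by
        rw [sc.S.lca_comm_s5 (fM B) (fM A)]; exact h2
      exact sc.S.displays_symm (sc.S.displays_of_right (fM B) (fM A) (fM C) h1' h2')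
  exact ⟨main, VS, sc.S, fM, hfM, hleafS, main⟩
end

section
/- Every LDT graph (G, σ) is a properly colored cograph, i.e., G contains no induced path on four vertices and adjacent vertices receive distinct colors. -/
/-- A vertex coloring is proper if adjacent vertices get distinct colors. -/
def ProperlyColored {L M : Type} (G : SimpleGraph L) (sigma : L → M) : Prop :=
  ∀ a b, G.Adj a b → sigma a ≠ sigma b

/-- `G` contains no induced path on four vertices. -/
def P4Free {L : Type} (G : SimpleGraph L) : Prop :=
  ¬ ∃ a b c d : L, a ≠ b ∧ a ≠ c ∧ a ≠ d ∧ b ≠ c ∧ b ≠ d ∧ c ≠ d ∧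
    G.Adj a b ∧ G.Adj b c ∧ G.Adj c d ∧ ¬ G.Adj a c ∧ ¬ G.Adj a d ∧ ¬ G.Adj b d

namespace LDTProof

/-- Monotonicity of a time map. -/
lemma mono {V : Type} {t : TreeOrder V} {tau : V → ℝ} (h : t.IsTimeMap tau)
    {x y : V} (hxy : t.le x y) : tau x ≤ tau y := by
  rcases eq_or_ne x y with rfl | hne
  · exact le_refl _
  · exact le_of_lt (h x y hxy hne)

/-- Three-point condition for lcas in a tree order. -/
lemma lca_three {V : Type} (t : TreeOrder V) (x y z : V) :
    (t.lca x y = t.lca x z ∧ t.le (t.lca y z) (t.lca x y)) ∨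
    (t.lca x y = t.lca y z ∧ t.le (t.lca x z) (t.lca x y)) ∨
    (t.lca x z = t.lca y z ∧ t.le (t.lca x y) (t.lca x z)) := by
  rcases t.chain x (t.lca x y) (t.lca x z) (t.le_lca_left x y) (t.le_lca_left x z) with hA | hB
  · -- lca x y ≤ lca x z
    rcases t.chain y (t.lca x y) (t.lca y z) (t.le_lca_right x y) (t.le_lca_left y z) with h1 | h2
    · -- lca x y ≤ lca y z : show lca x z = lca y z
      right; right
      have hx : t.le x (t.lca y z) := t.le_trans _ _ _ (t.le_lca_left x y) h1
      have h3 : t.le (t.lca x z) (t.lca y z) := t.lca_le _ _ _ hx (t.le_lca_right y z)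
      have hy : t.le y (t.lca x z) := t.le_trans _ _ _ (t.le_lca_right x y) hA
      have h4 : t.le (t.lca y z) (t.lca x z) := t.lca_le _ _ _ hy (t.le_lca_right x z)
      exact ⟨t.le_antisymm _ _ h3 h4, hA⟩
    · -- lca y z ≤ lca x y : show lca x y = lca x z
      left
      have hz : t.le z (t.lca x y) := t.le_trans _ _ _ (t.le_lca_right y z) h2
      have h3 : t.le (t.lca x z) (t.lca x y) := t.lca_le _ _ _ (t.le_lca_left x y) hz
      exact ⟨t.le_antisymm _ _ hA h3, h2⟩
  · -- lca x z ≤ lca x y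
    rcases t.chain z (t.lca x z) (t.lca y z) (t.le_lca_right x z) (t.le_lca_right y z) with h1 | h2
    · -- lca x z ≤ lca y z : show lca x y = lca y z
      right; left
      have hx : t.le x (t.lca y z) := t.le_trans _ _ _ (t.le_lca_left x z) h1
      have h3 : t.le (t.lca x y) (t.lca y z) := t.lca_le _ _ _ hx (t.le_lca_left y z)
      have hz : t.le z (t.lca x y) := t.le_trans _ _ _ (t.le_lca_right x z) hB
      have h4 : t.le (t.lca y z) (t.lca x y) := t.lca_le _ _ _ (t.le_lca_right x y) hz
      exact ⟨t.le_antisymm _ _ h3 h4, hB⟩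
    · -- lca y z ≤ lca x z : show lca x y = lca x z
      left
      have hy : t.le y (t.lca x z) := t.le_trans _ _ _ (t.le_lca_left y z) h2
      have h3 : t.le (t.lca x y) (t.lca x z) := t.lca_le _ _ _ (t.le_lca_left x z) hy
      exact ⟨t.le_antisymm _ _ h3 hB, t.le_trans _ _ _ h2 hB⟩

/-- Three-point condition for the time values of lcas. -/
lemma tau_three {V : Type} (t : TreeOrder V) {tau : V → ℝ} (h : t.IsTimeMap tau)
    (x y z : V) :
    (tau (t.lca x y) = tau (t.lca x z) ∧ tau (t.lca y z) ≤ tau (t.lca x y)) ∨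
    (tau (t.lca x y) = tau (t.lca y z) ∧ tau (t.lca x z) ≤ tau (t.lca x y)) ∨
    (tau (t.lca x z) = tau (t.lca y z) ∧ tau (t.lca x y) ≤ tau (t.lca x z)) := by
  rcases lca_three t x y z with ⟨he, hle⟩ | ⟨he, hle⟩ | ⟨he, hle⟩
  · exact Or.inl ⟨congrArg tau he, mono h hle⟩
  · exact Or.inr (Or.inl ⟨congrArg tau he, mono h hle⟩)
  · exact Or.inr (Or.inr ⟨congrArg tau he, mono h hle⟩)

/-- For a leaf `a` and `b ≠ a`, the lca of `a` and `b` is strictly above `a` in time. -/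
lemma leaf_lca_gt {V : Type} {t : TreeOrder V} {tau : V → ℝ} (h : t.IsTimeMap tau)
    {a b : V} (ha : t.IsLeaf a) (hab : a ≠ b) :
    tau a < tau (t.lca a b) := by
  apply h a (t.lca a b) (t.le_lca_left a b)
  intro heq
  exact hab ((ha b (heq ▸ t.le_lca_right a b)).symm)

lemma lca_self {V : Type} (t : TreeOrder V) (v : V) : t.lca v v = v :=
  t.le_antisymm _ _ (t.lca_le v v v (t.le_refl v) (t.le_refl v)) (t.le_lca_left v v)

end LDTProof

/-- Every LDT graph is a properly colored cograph
(no induced `P₄`, adjacent vertices have distinct colors). -/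
theorem stmt7 {L M : Type} (G : SimpleGraph L) (sigma : L → M)
    (h : IsLDTGraph G sigma) :
    ProperlyColored G sigma ∧ P4Free G := by
  obtain ⟨VT, VS, sc, fL, fM, hinjL, hinjM, hleafL, -, -, hcompat, hadj⟩ := h
  constructor
  · -- properly colored
    intro a b hab hcol
    obtain ⟨hne, hlt⟩ := (hadj a b).1 hab
    have hσ : sc.sigma (fL a) = sc.sigma (fL b) := by
      rw [hcompat a, hcompat b, hcol]
    rw [hσ, LDTProof.lca_self] at hlt
    have h1 : sc.tauT (fL a) < sc.tauT (sc.T.lca (fL a) (fL b)) :=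
      LDTProof.leaf_lca_gt sc.timeT (hleafL a) hne
    rw [sc.tau_leaf (fL a) (hleafL a), hσ] at h1
    exact absurd (h1.trans hlt) (lt_irrefl _)
  · -- P4-free
    rintro ⟨a, b, c, d, hab, hac, had, hbc, hbd, hcd, eab, ebc, ecd, nac, nad, nbd⟩
    set A := fL a; set B := fL b; set C := fL c; set D := fL d
    have t3 := LDTProof.tau_three sc.T sc.timeT
    have s3' := LDTProof.tau_three sc.S sc.timeS
    -- notation for the two "divergence time" functions
    let t : VT → VT → ℝ := fun x y => sc.tauT (sc.T.lca x y)
    let s : VT → VT → ℝ := fun x y => sc.tauS (sc.S.lca (sc.sigma x) (sc.sigma y))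
    have T3 : ∀ x y z : VT,
        (t x y = t x z ∧ t y z ≤ t x y) ∨ (t x y = t y z ∧ t x z ≤ t x y) ∨
        (t x z = t y z ∧ t x y ≤ t x z) := fun x y z => t3 x y z
    have S3 : ∀ x y z : VT,
        (s x y = s x z ∧ s y z ≤ s x y) ∨ (s x y = s y z ∧ s x z ≤ s x y) ∨
        (s x z = s y z ∧ s x y ≤ s x z) := fun x y z =>
      s3' (sc.sigma x) (sc.sigma y) (sc.sigma z)
    -- edges
    have eAB : t A B < s A B := ((hadj a b).1 eab).2
    have eBC : t B C < s B C := ((hadj b c).1 ebc).2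
    have eCD : t C D < s C D := ((hadj c d).1 ecd).2
    -- non-edges
    have nAC : s A C ≤ t A C := by
      by_contra hlt
      exact nac ((hadj a c).2 ⟨fun e => hac (hinjL e), lt_of_not_ge hlt⟩)
    have nAD : s A D ≤ t A D := by
      by_contra hlt
      exact nad ((hadj a d).2 ⟨fun e => had (hinjL e), lt_of_not_ge hlt⟩)
    have nBD : s B D ≤ t B D := by
      by_contra hlt
      exact nbd ((hadj b d).2 ⟨fun e => hbd (hinjL e), lt_of_not_ge hlt⟩)
    -- Step 1: s A C < s A B or s A C < s B C
    have hsAClt : s A C < s A B ∨ s A C < s B C := by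
      rcases T3 A B C with ⟨he, hle⟩ | ⟨he, hle⟩ | ⟨he, hle⟩
      · left; linarith
      · left; linarith
      · right; linarith
    -- Step 2: s A B = s B C and s A C < s A B
    have hS1 : s A B = s B C ∧ s A C < s A B := by
      rcases S3 A B C with ⟨he, hle⟩ | ⟨he, hle⟩ | ⟨he, hle⟩ <;>
        rcases hsAClt with h1 | h1 <;> exact ⟨by linarith, by linarith⟩
    -- Step 3: s B D < s B C or s B D < s C D
    have hsBDlt : s B D < s B C ∨ s B D < s C D := by
      rcases T3 B C D with ⟨he, hle⟩ | ⟨he, hle⟩ | ⟨he, hle⟩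
      · left; linarith
      · left; linarith
      · right; linarith
    -- Step 4: s B C = s C D and s B D < s B C
    have hS2 : s B C = s C D ∧ s B D < s B C := by
      rcases S3 B C D with ⟨he, hle⟩ | ⟨he, hle⟩ | ⟨he, hle⟩ <;>
        rcases hsBDlt with h1 | h1 <;> exact ⟨by linarith, by linarith⟩
    -- Step 5: s A D = s A B
    have hSAD : s A D = s A B := by
      rcases S3 A B D with ⟨he, hle⟩ | ⟨he, hle⟩ | ⟨he, hle⟩ <;> (try exact he.symm) <;>
        (exfalso; rcases hS1 with ⟨h1, h2⟩; rcases hS2 with ⟨h3, h4⟩; linarith)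
    -- Step 6: t B D ≥ s A B
    have hTBD : s A B ≤ t B D := by
      rcases T3 A B D with ⟨he, hle⟩ | ⟨he, hle⟩ | ⟨he, hle⟩ <;> linarith
    -- Step 7: contradiction from triple B C D in T
    rcases hS1 with ⟨h1, -⟩; rcases hS2 with ⟨h3, -⟩
    rcases T3 B C D with ⟨he, hle⟩ | ⟨he, hle⟩ | ⟨he, hle⟩ <;> linarith
end

section
/- For every complete multipartite graph G there exists a coloring σ of its vertices and a relaxed scenario 𝒮 = (T, S, σ, μ, τ_T, τ_S) such that (G, σ) equals the rs-Fitch graph (Ϝ(𝒮), σ). -/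
/-- Extension of the ancestor order of `S` to vertices and edges, where an
edge is encoded as the pair (parent, child). -/
def extLe {VS : Type} (S : TreeOrder VS) : VS ⊕ (VS × VS) → VS ⊕ (VS × VS) → Prop
  | Sum.inl x, Sum.inl y => S.le x y
  | Sum.inl x, Sum.inr p => S.le x p.2
  | Sum.inr p, Sum.inl x => S.le p.1 x
  | Sum.inr p, Sum.inr q => S.le p.2 q.2

/-- A relaxed scenario: planted trees `T`, `S` (with planted roots `rootT`,
`rootS`), a leaf coloring `σ`, a reconciliation map `μ` into vertices and
edges of `S`, and time maps making `μ` time-consistent. -/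
structure RelaxedScenario (VT VS : Type) where
  T : TreeOrder VT
  S : TreeOrder VS
  rootT : VT
  rootS : VS
  le_rootT : ∀ x, T.le x rootT
  le_rootS : ∀ x, S.le x rootS
  sigma : VT → VS
  sigma_leaf : ∀ x, T.IsLeaf x → S.IsLeaf (sigma x)
  mu : VT → VS ⊕ (VS × VS)
  mu_edge : ∀ x p, mu x = Sum.inr p → S.covers p.1 p.2
  mu_root : ∀ x, mu x = Sum.inl rootS ↔ x = rootT
  mu_leaf : ∀ x, mu x = Sum.inl (sigma x) ↔ T.IsLeaf x
  tauT : VT → ℝ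
  tauS : VS → ℝ
  timeT : T.IsTimeMap tauT
  timeS : S.IsTimeMap tauS
  time_vertex : ∀ u w, mu u = Sum.inl w → tauT u = tauS w
  time_edge : ∀ u p, mu u = Sum.inr p → tauS p.2 < tauT u ∧ tauT u < tauS p.1

/-- `(u,v)` is a transfer edge: an edge of `T` whose endpoints have
incomparable `μ`-images in `S`. -/
def RelaxedScenario.transferEdge {VT VS : Type} (sc : RelaxedScenario VT VS)
    (u v : VT) : Prop :=
  sc.T.covers u v ∧ ¬ extLe sc.S (sc.mu u) (sc.mu v) ∧ ¬ extLe sc.S (sc.mu v) (sc.mu u)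

/-- Adjacency of the rs-Fitch graph Ϝ(𝒮) on the leaves of `T`. -/
def RelaxedScenario.fitchAdj {VT VS : Type} (sc : RelaxedScenario VT VS)
    (a b : VT) : Prop :=
  a ≠ b ∧ ∃ u v, sc.transferEdge u v ∧ sc.T.onPath a b u v

/-- Adjacency of the LDT graph G(𝒮) on the leaves of `T`. -/
def RelaxedScenario.ldtAdj {VT VS : Type} (sc : RelaxedScenario VT VS)
    (a b : VT) : Prop :=
  a ≠ b ∧ sc.tauT (sc.T.lca a b) < sc.tauS (sc.S.lca (sc.sigma a) (sc.sigma b))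


/-- Species-tree vertex set: planted root, inner vertex `B`, extra leaf `Z`,
one leaf per color. -/
inductive SV (M : Type) : Type
  | root : SV M
  | B : SV M
  | Z : SV M
  | Lf (m : M) : SV M

namespace SV
variable {M : Type}

def le : SV M → SV M → Prop
  | .Lf m, .Lf m' => m = m'
  | .Lf _, .B => True
  | .Lf _, .root => True
  | .Z, .Z => True
  | .Z, .B => True
  | .Z, .root => True
  | .B, .B => True
  | .B, .root => True
  | .root, .root => True
  | _, _ => False

noncomputable def lca : SV M → SV M → SV M
  | .root, _ => .root
  | _, .root => .root
  | .Lf m, .Lf m' => open Classical in if m = m' then .Lf m else .B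
  | .Z, .Z => .Z
  | _, _ => .B

noncomputable def tree : TreeOrder (SV M) where
  le := le
  le_refl := by rintro (_|_|_|m) <;> simp [le]
  le_antisymm := by rintro (_|_|_|m) (_|_|_|m') <;> simp_all [le]
  le_trans := by rintro (_|_|_|m) (_|_|_|m') (_|_|_|m'') <;> simp_all [le]
  chain := by rintro (_|_|_|m) (_|_|_|m') (_|_|_|m'') <;> simp_all [le]
  lca := lca
  le_lca_left := by
    rintro (_|_|_|m) (_|_|_|m') <;> simp only [lca] <;> (try split) <;> simp_all [le]
  le_lca_right := by
    rintro (_|_|_|m) (_|_|_|m') <;> simp only [lca] <;> (try split) <;> simp_all [le]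
  lca_le := by
    rintro (_|_|_|m) (_|_|_|m') (_|_|_|m'') <;> simp only [lca] <;> (try split) <;>
      simp_all [le] <;> (rintro rfl rfl; simp_all)

end SV


/-- Gene-tree vertex set: planted root, inner vertex `A`, one vertex `C m` per
color, and one leaf per element of `L`. -/
inductive TV (M L : Type) : Type
  | root : TV M L
  | A : TV M L
  | C (m : M) : TV M L
  | Lf (x : L) : TV M L

namespace TV
variable {M L : Type} (col : L → M)

def le : TV M L → TV M L → Prop
  | .Lf x, .Lf y => x = y
  | .Lf x, .C m => col x = m
  | .Lf _, .A => True
  | .Lf _, .root => True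
  | .C m, .C m' => m = m'
  | .C _, .A => True
  | .C _, .root => True
  | .A, .A => True
  | .A, .root => True
  | .root, .root => True
  | _, _ => False

noncomputable def lca : TV M L → TV M L → TV M L
  | .root, _ => .root
  | _, .root => .root
  | .Lf x, .Lf y => open Classical in
      if x = y then .Lf x else if col x = col y then .C (col x) else .A
  | .Lf x, .C m => open Classical in if col x = m then .C m else .A
  | .C m, .Lf x => open Classical in if col x = m then .C m else .A
  | .C m, .C m' => open Classical in if m = m' then .C m else .A
  | _, _ => .A

noncomputable def tree : TreeOrder (TV M L) where
  le := le col
  le_refl := by rintro (_|_|m|x) <;> simp [le]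
  le_antisymm := by rintro (_|_|m|x) (_|_|m'|x') <;> simp_all [le]
  le_trans := by
    rintro (_|_|m|x) (_|_|m'|x') (_|_|m''|x'') <;> simp_all [le] <;>
      (intros; subst_vars; first | assumption | trivial | simp_all)
  chain := by
    rintro (_|_|m|x) (_|_|m'|x') (_|_|m''|x'') <;> simp_all [le] <;>
      (intros; subst_vars; first | assumption | trivial | simp_all)
  lca := lca col
  le_lca_left := by
    rintro (_|_|m|x) (_|_|m'|x') <;> simp only [lca] <;> (try split) <;> (try split) <;>
      simp_all [le]
  le_lca_right := by
    rintro (_|_|m|x) (_|_|m'|x') <;> simp only [lca] <;> (try split) <;> (try split) <;>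
      simp_all [le]
  lca_le := by
    rintro (_|_|m|x) (_|_|m'|x') (_|_|m''|x'') <;> simp only [lca] <;> (try split) <;>
      (try split) <;> simp_all [le] <;>
      (intros; subst_vars; try assumption; try trivial; try simp_all) <;>
      (intro hh; exact absurd hh.symm (by assumption))

end TV


namespace Stmt10
variable {M L : Type} (col : L → M)

noncomputable def mu : TV M L → SV M ⊕ (SV M × SV M)
  | .root => Sum.inl .root
  | .A => Sum.inr (.B, .Z)
  | .C m => Sum.inr (.B, .Lf m)
  | .Lf x => Sum.inl (.Lf (col x))

def sig : TV M L → SV M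
  | .root => .B
  | .A => .Z
  | .C _ => .Z
  | .Lf x => .Lf (col x)

noncomputable def tT : TV M L → ℝ
  | .root => 3
  | .A => 2
  | .C _ => 1
  | .Lf _ => 0

noncomputable def tS : SV M → ℝ
  | .root => 3
  | .B => 5/2
  | .Z => 0
  | .Lf _ => 0

theorem sLeaf_Lf (m : M) : (SV.tree (M := M)).IsLeaf (.Lf m) := by
  rintro (_|_|_|m') h <;> simp_all [SV.tree, SV.le]

theorem sLeaf_Z : (SV.tree (M := M)).IsLeaf .Z := by
  rintro (_|_|_|m') h <;> simp_all [SV.tree, SV.le]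

theorem tLeaf_Lf (x : L) : (TV.tree col).IsLeaf (.Lf x) := by
  rintro (_|_|m'|x') h <;> simp_all [TV.tree, TV.le]

theorem tLeaf_iff (hs : Function.Surjective col) [Nonempty L] (v : TV M L) :
    (TV.tree col).IsLeaf v ↔ ∃ x, v = .Lf x := by
  constructor
  · intro h
    match v with
    | .Lf x => exact ⟨x, rfl⟩
    | .root => exact absurd (h .A trivial) (by simp)
    | .A =>
        obtain ⟨x⟩ := ‹Nonempty L›
        exact absurd (h (.C (col x)) trivial) (by simp)
    | .C m =>
        obtain ⟨x, rfl⟩ := hs m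
        exact absurd (h (.Lf x) rfl) (by simp)
  · rintro ⟨x, rfl⟩; exact tLeaf_Lf col x

noncomputable def sc (hs : Function.Surjective col) [Nonempty L] :
    RelaxedScenario (TV M L) (SV M) where
  T := TV.tree col
  S := SV.tree
  rootT := .root
  rootS := .root
  le_rootT := by rintro (_|_|m|x) <;> simp [TV.tree, TV.le]
  le_rootS := by rintro (_|_|_|m) <;> simp [SV.tree, SV.le]
  sigma := sig col
  sigma_leaf := by
    intro v hv
    rw [tLeaf_iff col hs] at hv
    obtain ⟨x, rfl⟩ := hv
    exact sLeaf_Lf (col x)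
  mu := mu col
  mu_edge := by
    rintro (_|_|m|x) p h <;> simp [mu] at h <;> subst h <;>
      exact ⟨trivial, by simp, by rintro (_|_|_|m') h1 h2 <;> simp_all [SV.tree, SV.le]⟩
  mu_root := by
    rintro (_|_|m|x) <;> simp [mu]
  mu_leaf := by
    rintro v
    rw [tLeaf_iff col hs]
    match v with
    | .root => simp [mu, sig]
    | .A => simp [mu, sig]
    | .C m => simp [mu, sig]
    | .Lf x => simp [mu, sig]
  tauT := tT
  tauS := tS
  timeT := by
    rintro (_|_|m|x) (_|_|m'|x') h hne <;> simp_all [TV.tree, TV.le, tT] <;> norm_num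
  timeS := by
    rintro (_|_|_|m) (_|_|_|m') h hne <;> simp_all [SV.tree, SV.le, tS] <;> norm_num
  time_vertex := by
    rintro (_|_|m|x) w h <;> simp_all [mu] <;> subst h <;> simp [tT, tS]
  time_edge := by
    rintro (_|_|m|x) p h <;> simp_all [mu] <;> subst h <;> simp [tT, tS] <;> norm_num

end Stmt10


namespace Stmt10

/-- Tree order on nonpositive reals: a dense order with no leaves, used for
the degenerate case of an empty vertex set. -/
noncomputable def negTree : TreeOrder {x : ℝ // x ≤ 0} where
  le a b := a.1 ≤ b.1
  le_refl x := le_refl _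
  le_antisymm x y h1 h2 := Subtype.ext (le_antisymm h1 h2)
  le_trans x y z := le_trans
  chain x y z _ _ := le_total y.1 z.1
  lca x y := ⟨max x.1 y.1, max_le x.2 y.2⟩
  le_lca_left x y := le_max_left _ _
  le_lca_right x y := le_max_right _ _
  lca_le x y z h1 h2 := max_le h1 h2

theorem negTree_no_leaf (v : {x : ℝ // x ≤ 0}) : ¬ negTree.IsLeaf v := by
  intro h
  have h2 := h ⟨v.1 - 1, by linarith [v.2]⟩ (show (v.1 - 1 : ℝ) ≤ v.1 by linarith)
  have h3 := congrArg Subtype.val h2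
  simp only [] at h3
  have : v.1 - 1 = v.1 := h3
  linarith

noncomputable def negSc : RelaxedScenario {x : ℝ // x ≤ 0} {x : ℝ // x ≤ 0} where
  T := negTree
  S := negTree
  rootT := ⟨0, le_refl 0⟩
  rootS := ⟨0, le_refl 0⟩
  le_rootT x := x.2
  le_rootS x := x.2
  sigma v := ⟨v.1 - 1, by linarith [v.2]⟩
  sigma_leaf x hx := absurd hx (negTree_no_leaf x)
  mu v := Sum.inl v
  mu_edge := by intro x p h; simp at h
  mu_root := by intro x; simp [Subtype.ext_iff]
  mu_leaf := by
    intro x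
    simp only [Sum.inl.injEq]
    constructor
    · intro h
      have := congrArg Subtype.val h
      simp at this
      exact (by linarith : False).elim
    · intro h; exact absurd h (negTree_no_leaf x)
  tauT v := v.1
  tauS v := v.1
  timeT x y hxy hne := lt_of_le_of_ne hxy (fun h => hne (Subtype.ext h))
  timeS x y hxy hne := lt_of_le_of_ne hxy (fun h => hne (Subtype.ext h))
  time_vertex := by intro u w h; cases h; rfl
  time_edge := by intro u p h; simp at h

end Stmt10

/-- For every complete multipartite graph `G` there exist a
coloring `σ` of its vertices and a relaxed scenario `𝒮` such that `(G, σ)` is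
the rs-Fitch graph of `𝒮`. -/
theorem stmt10 {L : Type} [Fintype L] (G : SimpleGraph L)
    (hG : IsCompleteMultipartite G) :
    ∃ (M VT VS : Type) (sigma : L → M) (sc : RelaxedScenario VT VS)
      (fL : L → VT) (fM : M → VS),
      Function.Injective fL ∧ Function.Injective fM ∧
      (∀ x, sc.T.IsLeaf (fL x)) ∧ (∀ v, sc.T.IsLeaf v → ∃ x, fL x = v) ∧
      (∀ m, sc.S.IsLeaf (fM m)) ∧
      (∀ x, sc.sigma (fL x) = fM (sigma x)) ∧
      (∀ a b : L, G.Adj a b ↔ sc.fitchAdj (fL a) (fL b)) := by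
  obtain ⟨r, hEq, hAdj⟩ := hG
  by_cases hL : Nonempty L
  · letI := hL
    letI s : Setoid L := ⟨r, hEq⟩
    let col : L → Quotient s := Quotient.mk s
    have hs : Function.Surjective col := fun m => Quotient.exists_rep m
    refine ⟨Quotient s, TV (Quotient s) L, SV (Quotient s), col, Stmt10.sc col hs,
      TV.Lf, SV.Lf, ?_, ?_, ?_, ?_, ?_, ?_, ?_⟩
    · intro a b h; injection h
    · intro a b h; injection h
    · intro x; exact Stmt10.tLeaf_Lf col x
    · intro v hv
      rw [show (Stmt10.sc col hs).T = TV.tree col from rfl,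
        Stmt10.tLeaf_iff col hs] at hv
      obtain ⟨x, rfl⟩ := hv
      exact ⟨x, rfl⟩
    · intro m; exact Stmt10.sLeaf_Lf m
    · intro x; rfl
    · intro a b
      rw [hAdj]
      constructor
      · intro hnr
        have hab : a ≠ b := by rintro rfl; exact hnr (hEq.refl a)
        have hc : ¬ col a = col b := fun h => hnr (Quotient.exact h)
        refine ⟨by simp [hab], .A, .C (col a), ⟨⟨trivial, by simp, ?_⟩, ?_, ?_⟩,
          Or.inl ?_, ?_⟩
        · rintro (_|_|m'|x') h1 h2 <;> simp_all [Stmt10.sc, TV.tree, TV.le]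
        · simp [Stmt10.sc, Stmt10.mu, extLe, SV.tree, SV.le]
        · simp [Stmt10.sc, Stmt10.mu, extLe, SV.tree, SV.le]
        · show TV.le col (.Lf a) (.C (col a)); rfl
        · show TV.le col .A (TV.lca col (.Lf a) (.Lf b))
          simp [TV.lca, hab, hc, TV.le]
      · rintro ⟨hne, u, v, ⟨⟨hvu, hvne, -⟩, h1, h2⟩, hp1, hp2⟩ hrab
        have hcab : col a = col b := Quotient.sound hrab
        have hab : a ≠ b := by rintro rfl; exact hne rfl
        have hlca : TV.lca col (.Lf a) (.Lf b) = .C (col a) := by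
          simp [TV.lca, hab, hcab]
        replace hp2 : TV.le col u (.C (col a)) := by
          simpa [Stmt10.sc, TV.tree, hlca] using hp2
        rcases u with _|_|m|x
        · simp [TV.le] at hp2
        · simp [TV.le] at hp2
        · -- u = C m, with m = col a
          have hm : m = col a := hp2
          rcases v with _|_|m'|y
          · simp [Stmt10.sc, TV.tree, TV.le] at hvu
          · simp [Stmt10.sc, TV.tree, TV.le] at hvu
          · have : m' = m := hvu
            exact hvne (by rw [this])
          · -- v = Lf y with col y = m : this edge is not a transfer edge
            have hy : col y = m := hvu
            apply h2
            show extLe SV.tree (Stmt10.mu col (.Lf y)) (Stmt10.mu col (.C m))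
            simp [Stmt10.mu, extLe, SV.tree, SV.le, hy]
        · -- u = Lf x : a leaf has no child
          rcases v with _|_|m'|y
          · simp [Stmt10.sc, TV.tree, TV.le] at hvu
          · simp [Stmt10.sc, TV.tree, TV.le] at hvu
          · simp [Stmt10.sc, TV.tree, TV.le] at hvu
          · have : y = x := hvu
            exact hvne (by rw [this])
  · haveI : IsEmpty L := not_nonempty_iff.mp hL
    refine ⟨Empty, {x : ℝ // x ≤ 0}, {x : ℝ // x ≤ 0},
      fun x => (IsEmpty.false x).elim, Stmt10.negSc,
      fun x => (IsEmpty.false x).elim, fun m => m.elim, ?_, ?_, ?_, ?_, ?_, ?_, ?_⟩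
    · intro a; exact (IsEmpty.false a).elim
    · intro a; exact a.elim
    · intro x; exact (IsEmpty.false x).elim
    · intro v hv; exact absurd hv (Stmt10.negTree_no_leaf v)
    · intro m; exact m.elim
    · intro x; exact (IsEmpty.false x).elim
    · intro a; exact (IsEmpty.false a).elim
end

section
/- A vertex-colored graph (G, σ) is both an LDT graph and an rs-Fitch graph if and only if (G, σ) is a properly colored complete multipartite graph. -/
/-- A set of rooted triples (on the label set `M`) is compatible: some tree,
with the labels placed on leaves, displays all of them. -/
def TripleSetCompatible {M : Type} (R : Set (M × M × M)) : Prop :=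
  ∃ (W : Type) (t : TreeOrder W) (g : M → W), Function.Injective g ∧
    (∀ m, t.IsLeaf (g m)) ∧
    ∀ A B C : M, (A, B, C) ∈ R → t.displays (g A) (g B) (g C)

/-- Characterization of LDT graphs (taken as the definition): a properly
colored cograph whose color triple set 𝔖(G, σ) is compatible. -/
def IsLDTchar {L M : Type} (G : SimpleGraph L) (sigma : L → M) : Prop :=
  ProperlyColored G sigma ∧ P4Free G ∧ TripleSetCompatible (tripleSetS G sigma)

/-- The independent sets (parts) of a complete multipartite graph `G`:
for each vertex `x`, its part is the set of vertices non-adjacent to `x`. -/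
def parts {L : Type} (G : SimpleGraph L) : Set (Set L) :=
  {I | ∃ x : L, I = {y | ¬ G.Adj x y}}

/-- The auxiliary graph 𝔄(σ, 𝒥) on the color set `M`: distinct colors
`m, m'` are adjacent iff both occur on some member of the family `𝒥`. -/
def auxGraph {L M : Type} (sigma : L → M) (J : Set (Set L)) : SimpleGraph M where
  Adj m m' := m ≠ m' ∧ ∃ I ∈ J, m ∈ sigma '' I ∧ m' ∈ sigma '' I
  symm := by
    constructor
    intro m m' h
    obtain ⟨hne, I, hI, h1, h2⟩ := h
    exact ⟨hne.symm, I, hI, h2, h1⟩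
  loopless := by
    constructor
    intro m h
    exact h.1 rfl

/-- Characterization of rs-Fitch graphs (taken as the definition):
a complete multipartite graph `(G, σ)` such that, if it has more than one
independent set, some independent set `I'` can be removed so that the
auxiliary graph 𝔄(σ, ℐ∖{I'}) is disconnected. -/
def IsRsFitchChar {L M : Type} (G : SimpleGraph L) (sigma : L → M) : Prop :=
  IsCompleteMultipartite G ∧
    ((parts G).Nontrivial →
      ∃ I' ∈ parts G, ¬ (auxGraph sigma ((parts G) \ {I'})).Preconnected)

/-!
Only the converse needs an argument. In a properly colored complete multipartite graph each
color class lies inside a single independent set, so every color `A` determines a part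
`colorPart G σ A`. A triple `AB|C` of 𝔖(G, σ) has `A` and `B` in one part and `C` in another, so
𝔖(G, σ) is displayed by the depth-two tree whose inner vertices are the parts. Likewise every
edge of 𝔄(σ, 𝒥) joins two colors of the same part, so 𝔄(σ, 𝒥) is disconnected for every
family 𝒥 of parts as soon as there are two parts.
-/

inductive DepthTwo (M Q : Type)
  | leaf : M → DepthTwo M Q
  | inner : Q → DepthTwo M Q
  | root : DepthTwo M Q

namespace DepthTwo

variable {M Q : Type} (f : M → Q)

def Below : DepthTwo M Q → DepthTwo M Q → Prop
  | leaf a, leaf b => a = b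
  | leaf a, inner q => f a = q
  | inner q, inner q' => q = q'
  | _, root => True
  | _, _ => False

open Classical in
noncomputable def lca : DepthTwo M Q → DepthTwo M Q → DepthTwo M Q
  | leaf a, leaf b => if a = b then leaf a else if f a = f b then inner (f a) else root
  | leaf a, inner q | inner q, leaf a => if f a = q then inner q else root
  | inner q, inner q' => if q = q' then inner q else root
  | _, _ => root

noncomputable def treeOrder : TreeOrder (DepthTwo M Q) where
  le := Below f
  le_refl := by rintro (a | q | _) <;> simp [Below]
  le_antisymm := by rintro (a | q | _) (b | q' | _) <;> simp_all [Below]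
  le_trans := by rintro (a | q | _) (b | q' | _) (c | q'' | _) <;> simp only [Below] <;> grind
  chain := by rintro (a | q | _) (b | q' | _) (c | q'' | _) <;> simp only [Below] <;> grind
  lca := lca f
  le_lca_left := by rintro (a | q | _) (b | q' | _) <;> simp only [lca] <;> grind [Below]
  le_lca_right := by rintro (a | q | _) (b | q' | _) <;> simp only [lca] <;> grind [Below]
  lca_le := by
    rintro (a | q | _) (b | q' | _) (c | q'' | _) <;> simp only [lca, Below] <;> grind [Below]

theorem isLeaf_leaf (m : M) : (treeOrder f).IsLeaf (leaf m) := by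
  rintro (b | q | _) h <;> simp_all [treeOrder, Below]

theorem displays_leaf {a b c : M} (hab : a ≠ b) (hfab : f a = f b) (hfac : f a ≠ f c) :
    (treeOrder f).displays (leaf a) (leaf b) (leaf c) := by
  have hac : a ≠ c := by rintro rfl; exact hfac rfl
  have hbc : b ≠ c := by rintro rfl; exact hfac hfab
  have hfbc : f b ≠ f c := hfab ▸ hfac
  simp [TreeOrder.displays, treeOrder, lca, Below, hab, hfab, hac, hbc, hfbc]

end DepthTwo

theorem tripleSetCompatible_of_forall_mem {M Q : Type} {R : Set (M × M × M)} (f : M → Q)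
    (hR : ∀ A B C, (A, B, C) ∈ R → A ≠ B ∧ f A = f B ∧ f A ≠ f C) :
    TripleSetCompatible R :=
  ⟨_, DepthTwo.treeOrder f, DepthTwo.leaf, fun _ _ h => DepthTwo.leaf.inj h,
    DepthTwo.isLeaf_leaf f, fun _ _ _ h =>
      let ⟨hab, hfab, hfac⟩ := hR _ _ _ h
      DepthTwo.displays_leaf f hab hfab hfac⟩

section CompleteMultipartite

variable {L M : Type} {G : SimpleGraph L} {σ : L → M}

theorem isCompleteMultipartite_iff : IsCompleteMultipartite G ↔ G.IsCompleteMultipartite := by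
  constructor
  · rintro ⟨r, hr, hadj⟩
    refine ⟨fun a b c hab hbc => ?_⟩
    simp only [hadj, not_not] at hab hbc ⊢
    exact hr.trans hab hbc
  · intro hG
    exact ⟨_, hG.setoid.iseqv, fun a b => not_not.symm⟩

theorem P4Free.of_isCompleteMultipartite (hG : G.IsCompleteMultipartite) : P4Free G := by
  rintro ⟨a, -, c, d, -, -, -, -, -, -, -, -, hcd, hac, had, -⟩
  exact hG.trans c a d (fun h => hac h.symm) had hcd

theorem setOf_not_adj_eq_iff (hG : G.IsCompleteMultipartite) {u v : L} :
    {y | ¬ G.Adj u y} = {y | ¬ G.Adj v y} ↔ ¬ G.Adj u v := by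
  refine ⟨fun h => (Set.ext_iff.1 h v).2 G.irrefl, fun huv => ?_⟩
  ext y
  exact ⟨hG.trans v u y (fun h => huv h.symm), hG.trans u v y huv⟩

theorem ProperlyColored.not_adj_of_eq (hσ : ProperlyColored G σ) {u v : L} (h : σ u = σ v) :
    ¬ G.Adj u v :=
  fun hadj => hσ u v hadj h

/-- The part containing the vertices of color `A` (empty if `A` does not occur). -/
def colorPart (G : SimpleGraph L) (σ : L → M) (A : M) : Set L :=
  {y | ∃ x, σ x = A ∧ ¬ G.Adj x y}

variable (hG : G.IsCompleteMultipartite) (hσ : ProperlyColored G σ)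
include hG hσ

theorem colorPart_apply (u : L) : colorPart G σ (σ u) = {y | ¬ G.Adj u y} := by
  ext y
  refine ⟨fun ⟨x, hx, hxy⟩ => hG.trans u x y (hσ.not_adj_of_eq hx.symm) hxy, fun h => ⟨u, rfl, h⟩⟩

theorem colorPart_eq_iff {u v : L} :
    colorPart G σ (σ u) = colorPart G σ (σ v) ↔ ¬ G.Adj u v := by
  rw [colorPart_apply hG hσ, colorPart_apply hG hσ, setOf_not_adj_eq_iff hG]

theorem tripleSetCompatible_tripleSetS : TripleSetCompatible (tripleSetS G σ) := by
  refine tripleSetCompatible_of_forall_mem (colorPart G σ) ?_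
  rintro _ _ _ ⟨x, y, z, rfl, rfl, rfl, hxy, -, -, hxz, -, hnxy⟩
  exact ⟨hxy, (colorPart_eq_iff hG hσ).2 hnxy, fun h => (colorPart_eq_iff hG hσ).1 h hxz⟩

theorem colorPart_eq_of_reachable_auxGraph {J : Set (Set L)} (hJ : J ⊆ parts G) {m m' : M}
    (h : (auxGraph σ J).Reachable m m') : colorPart G σ m = colorPart G σ m' := by
  obtain ⟨p⟩ := h
  induction p with
  | nil => rfl
  | cons hadj _ ih =>
    obtain ⟨-, I, hI, ⟨u, hu, rfl⟩, ⟨v, hv, rfl⟩⟩ := hadj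
    obtain ⟨w, rfl⟩ := hJ hI
    exact ((colorPart_eq_iff hG hσ).2 (hG.trans u w v (fun h => hu h.symm) hv)).trans ih

theorem not_preconnected_auxGraph {J : Set (Set L)} (hJ : J ⊆ parts G)
    (hparts : (parts G).Nontrivial) : ¬ (auxGraph σ J).Preconnected := by
  obtain ⟨_, ⟨u, rfl⟩, _, ⟨v, rfl⟩, huv⟩ := hparts
  intro hconn
  have hadj : G.Adj u v := not_not.1 (mt (setOf_not_adj_eq_iff hG).2 huv)
  exact (colorPart_eq_iff hG hσ).1 (colorPart_eq_of_reachable_auxGraph hG hσ hJ (hconn _ _)) hadj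

theorem isRsFitchChar_of_isCompleteMultipartite : IsRsFitchChar G σ :=
  ⟨isCompleteMultipartite_iff.2 hG, fun hparts =>
    let ⟨I, hI⟩ := hparts.nonempty
    ⟨I, hI, not_preconnected_auxGraph hG hσ Set.sdiff_subset hparts⟩⟩

end CompleteMultipartite

theorem stmt14_general {L M : Type}
    (G : SimpleGraph L) (sigma : L → M) :
    (IsLDTchar G sigma ∧ IsRsFitchChar G sigma) ↔
      (ProperlyColored G sigma ∧ IsCompleteMultipartite G) := by
  refine ⟨fun ⟨⟨hσ, _⟩, hG, _⟩ => ⟨hσ, hG⟩, fun ⟨hσ, hG⟩ => ?_⟩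
  rw [isCompleteMultipartite_iff] at hG
  exact ⟨⟨hσ, .of_isCompleteMultipartite hG, tripleSetCompatible_tripleSetS hG hσ⟩,
    isRsFitchChar_of_isCompleteMultipartite hG hσ⟩

/-- `(G, σ)` is both an LDT graph and an rs-Fitch graph iff
it is a properly colored complete multipartite graph. -/
theorem stmt14 {L M : Type} [Fintype L] [Fintype M]
    (G : SimpleGraph L) (sigma : L → M) :
    (IsLDTchar G sigma ∧ IsRsFitchChar G sigma) ↔
      (ProperlyColored G sigma ∧ IsCompleteMultipartite G) :=
  stmt14_general G sigma
end

section
/- Let (T, λ) be a rooted tree with 0/1 edge labeling and let e be an inner 0-edge of T. Then the Fitch graph is invariant under contraction of e: Ϝ(T, λ) = Ϝ(T/e, λ/e), where λ/e keeps the labels of all non-contracted edges. -/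
/-- Contracting an inner 0-edge `(x, y)` (with child `y`)
of a 0/1-edge-labeled tree leaves the Fitch graph unchanged.  The contracted
tree `t'` lives on the vertices distinct from `y`, its ancestor order is the
induced one, and the labeling keeps the labels of all non-contracted edges
(edges from `y` to its children become edges from `x`). -/
theorem stmt17 {V : Type} (t : TreeOrder V) (lab : V → V → Prop)
    (x y : V) (hxy : t.covers x y) (hy : ¬ t.IsLeaf y) (h0 : ¬ lab x y)
    (t' : TreeOrder {v : V // v ≠ y})
    (hle : ∀ a b : {v : V // v ≠ y}, t'.le a b ↔ t.le a.1 b.1) :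
    ∀ a b : {v : V // v ≠ y}, t.IsLeaf a.1 → t.IsLeaf b.1 →
      (fitchAdj t lab a.1 b.1 ↔
        fitchAdj t' (fun u v =>
          (lab u.1 v.1 ∧ t.covers u.1 v.1) ∨
          (u.1 = x ∧ lab y v.1 ∧ t.covers y v.1)) a b) := by
  intro a b ha hb
  obtain ⟨hyx, hyne, hcov⟩ := hxy
  have hxney : x ≠ y := Ne.symm hyne
  -- If `y ≤ w` and `w ≠ y`, then `x ≤ w` (jump over the contracted edge).
  have jump : ∀ w, t.le y w → w ≠ y → t.le x w := by
    intro w h1 h2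
    rcases t.chain y w x h1 hyx with h | h
    · rcases hcov w h1 h with h' | h'
      · exact absurd h' h2
      · rw [h']; exact t.le_refl _
    · exact h
  have hac : t.le a.1 (t'.lca a b).1 := (hle _ _).1 (t'.le_lca_left a b)
  have hbc : t.le b.1 (t'.lca a b).1 := (hle _ _).1 (t'.le_lca_right a b)
  have haL : t.le a.1 (t.lca a.1 b.1) := t.le_lca_left _ _
  have hbL : t.le b.1 (t.lca a.1 b.1) := t.le_lca_right _ _
  have hLc : t.le (t.lca a.1 b.1) (t'.lca a b).1 := t.lca_le _ _ _ hac hbc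
  have hcL : ∀ h : t.lca a.1 b.1 ≠ y, (t'.lca a b).1 = t.lca a.1 b.1 := by
    intro hLy
    have h1 : t'.le (t'.lca a b) ⟨t.lca a.1 b.1, hLy⟩ :=
      t'.lca_le a b _ ((hle _ _).2 haL) ((hle _ _).2 hbL)
    exact t.le_antisymm _ _ ((hle _ _).1 h1) hLc
  have hcx : t.lca a.1 b.1 = y → (t'.lca a b).1 = x := by
    intro hLy
    rw [hLy] at hLc haL hbL
    have h1 : t'.le (t'.lca a b) ⟨x, hxney⟩ := t'.lca_le a b _
      ((hle _ _).2 (t.le_trans _ _ _ haL hyx))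
      ((hle _ _).2 (t.le_trans _ _ _ hbL hyx))
    have h2 : t.le x (t'.lca a b).1 := jump _ hLc (t'.lca a b).2
    exact t.le_antisymm _ _ ((hle _ _).1 h1) h2
  have covers1 : ∀ (u v : V) (hu : u ≠ y) (hv : v ≠ y),
      t.covers u v → t'.covers ⟨u, hu⟩ ⟨v, hv⟩ := by
    rintro u v hu hv ⟨h1, h2, h3⟩
    refine ⟨(hle _ _).2 h1, fun h => h2 (congrArg Subtype.val h), ?_⟩
    intro w hw1 hw2
    rcases h3 w.1 ((hle _ _).1 hw1) ((hle _ _).1 hw2) with h | h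
    · exact Or.inl (Subtype.ext h)
    · exact Or.inr (Subtype.ext h)
  have covers2 : ∀ (v : V) (hv : v ≠ y),
      t.covers y v → t'.covers ⟨x, hxney⟩ ⟨v, hv⟩ := by
    rintro v hv ⟨h1, h2, h3⟩
    refine ⟨(hle _ _).2 (t.le_trans _ _ _ h1 hyx), ?_, ?_⟩
    · intro h
      have hvx : v = x := congrArg Subtype.val h
      exact hxney (t.le_antisymm x y (by rw [← hvx]; exact h1) hyx)
    · intro w hw1 hw2
      rcases t.chain v w.1 y ((hle _ _).1 hw1) h1 with h | h
      · rcases h3 w.1 ((hle _ _).1 hw1) h with h' | h'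
        · exact Or.inl (Subtype.ext h')
        · exact absurd h' w.2
      · rcases hcov w.1 h ((hle _ _).1 hw2) with h' | h'
        · exact absurd h' w.2
        · exact Or.inr (Subtype.ext h')
  constructor
  · rintro ⟨hab, u, v, hcuv, hlab, hpath, hulca⟩
    have hab' : a ≠ b := fun h => hab (congrArg Subtype.val h)
    have hvy : v ≠ y := by
      intro hv
      rw [hv] at hcuv hlab
      obtain ⟨h1, h2, h3⟩ := hcuv
      rcases t.chain y u x h1 hyx with h | h
      · rcases hcov u h1 h with h' | h'
        · exact h2 h'.symm
        · rw [h'] at hlab; exact h0 hlab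
      · rcases h3 x hyx h with h' | h'
        · exact hxney h'
        · rw [← h'] at hlab; exact h0 hlab
    rcases eq_or_ne u y with huy | huy
    · rw [huy] at hcuv hlab hulca
      refine ⟨hab', ⟨x, hxney⟩, ⟨v, hvy⟩, covers2 v hvy hcuv,
        Or.inr ⟨rfl, hlab, hcuv⟩, hpath.imp ((hle _ _).2) ((hle _ _).2), ?_⟩
      refine (hle _ _).2 ?_
      by_cases hLy : t.lca a.1 b.1 = y
      · rw [hcx hLy]; exact t.le_refl x
      · rw [hcL hLy]; exact jump _ hulca hLy
    · refine ⟨hab', ⟨u, huy⟩, ⟨v, hvy⟩, covers1 u v huy hvy hcuv,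
        Or.inl ⟨hlab, hcuv⟩, hpath.imp ((hle _ _).2) ((hle _ _).2), ?_⟩
      refine (hle _ _).2 ?_
      by_cases hLy : t.lca a.1 b.1 = y
      · rw [hcx hLy]
        exact t.le_trans _ _ _ hulca (by rw [hLy] at hulca ⊢; exact hyx)
      · rw [hcL hLy]; exact hulca
  · rintro ⟨hab, u, v, hcuv', hlab', hpath', hulca'⟩
    have hab' : a.1 ≠ b.1 := fun h => hab (Subtype.ext h)
    have hpath : t.le a.1 v.1 ∨ t.le b.1 v.1 := hpath'.imp ((hle _ _).1) ((hle _ _).1)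
    have huc : t.le u.1 (t'.lca a b).1 := (hle _ _).1 hulca'
    rcases hlab' with ⟨hlab, hcuv⟩ | ⟨hux, hlab, hcyv⟩
    · refine ⟨hab', u.1, v.1, hcuv, hlab, hpath, ?_⟩
      by_cases hLy : t.lca a.1 b.1 = y
      · rw [hcx hLy] at huc
        rw [hLy] at haL hbL ⊢
        have key : ∀ ℓ, t.le ℓ v.1 → t.le ℓ y → t.le u.1 y := by
          intro ℓ h1 h2
          have h1u : t.le ℓ u.1 := t.le_trans _ _ _ h1 hcuv.1
          rcases t.chain ℓ u.1 y h1u h2 with h | h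
          · exact h
          · exfalso
            have hux : u.1 = x := by
              rcases hcov u.1 h huc with h' | h'
              · exact absurd h' u.2
              · exact h'
            rcases t.chain ℓ v.1 y h1 h2 with hv | hv
            · rcases hcuv.2.2 y hv (by rw [hux]; exact hyx) with h' | h'
              · exact v.2 h'.symm
              · exact u.2 h'.symm
            · rcases hcov v.1 hv (by rw [← hux]; exact hcuv.1) with h' | h'
              · exact v.2 h'
              · exact hcuv.2.1 (h'.trans hux.symm)
        rcases hpath with h | h
        · exact key a.1 h haL
        · exact key b.1 h hbL
      · rw [← hcL hLy]; exact huc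
    · refine ⟨hab', y, v.1, hcyv, hlab, hpath, ?_⟩
      by_cases hLy : t.lca a.1 b.1 = y
      · rw [hLy]; exact t.le_refl y
      · have hxL : t.le x (t.lca a.1 b.1) := by rw [← hcL hLy, ← hux]; exact huc
        have key : ∀ ℓ, t.le ℓ v.1 → t.le ℓ (t.lca a.1 b.1) → t.le y (t.lca a.1 b.1) := by
          intro ℓ h1 h2
          rcases t.chain ℓ y (t.lca a.1 b.1) (t.le_trans _ _ _ h1 hcyv.1) h2 with h | h
          · exact h
          · exact absurd (t.le_antisymm x y (t.le_trans _ _ _ hxL h) hyx) hxney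
        rcases hpath with h | h
        · exact key a.1 h haL
        · exact key b.1 h hbL
end

section
/- Let (T, λ) be a 0/1-edge-labeled rooted tree and let e = (v, x) be an outer edge with λ(e) = 0 where x is a leaf. Then e is relevantly labeled (i.e., flipping λ(e) to 1 changes the Fitch graph) if and only if there exists a leaf z ≠ x with zx not an edge of Ϝ(T, λ). -/

theorem fitch_symm {V : Type} (t : TreeOrder V) (lab : V → V → Prop) {a b : V}
    (h : fitchAdj t lab a b) : fitchAdj t lab b a := by
  obtain ⟨hne, u, w, hc, hl, hp1, hp2⟩ := h
  refine ⟨hne.symm, u, w, hc, hl, hp1.symm, ?_⟩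
  have hlca : t.lca a b = t.lca b a :=
    t.le_antisymm _ _ (t.lca_le _ _ _ (t.le_lca_right b a) (t.le_lca_left b a))
      (t.lca_le _ _ _ (t.le_lca_right a b) (t.le_lca_left a b))
  rwa [← hlca]

/-- An outer 0-edge `(v, x)` (with `x` a leaf) is relevantly
labeled — i.e., flipping its label to 1 changes the Fitch graph (on leaves) —
iff there is a leaf `z ≠ x` that is not Fitch-adjacent to `x`. -/
theorem stmt18 {V : Type} (t : TreeOrder V) (lab : V → V → Prop)
    (v x : V) (hcov : t.covers v x) (hx : t.IsLeaf x) (h0 : ¬ lab v x) :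
    (∃ a b : V, t.IsLeaf a ∧ t.IsLeaf b ∧
        ¬ (fitchAdj t lab a b ↔
            fitchAdj t (fun p q => lab p q ∨ (p = v ∧ q = x)) a b)) ↔
      ∃ z : V, t.IsLeaf z ∧ z ≠ x ∧ ¬ fitchAdj t lab z x := by
  constructor
  · rintro ⟨a, b, ha, hb, hniff⟩
    have mono : fitchAdj t lab a b →
        fitchAdj t (fun p q => lab p q ∨ (p = v ∧ q = x)) a b := by
      rintro ⟨hne, u, w, hc, hl, hp⟩
      exact ⟨hne, u, w, hc, Or.inl hl, hp⟩
    have h2 : ¬ fitchAdj t lab a b := fun h => hniff ⟨fun _ => mono h, fun _ => h⟩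
    have h1 : fitchAdj t (fun p q => lab p q ∨ (p = v ∧ q = x)) a b := by
      by_contra h
      exact hniff ⟨fun hh => absurd hh h2, fun hh => absurd hh h⟩
    obtain ⟨hne, u, w, hc, hl, hp1, hp2⟩ := h1
    rcases hl with hl | ⟨huv, hwx⟩
    · exact absurd ⟨hne, u, w, hc, hl, hp1, hp2⟩ h2
    · rw [hwx] at hp1
      rcases hp1 with hax | hbx
      · have hax' : a = x := hx a hax
        subst hax'
        exact ⟨b, hb, fun hbx' => hne hbx'.symm,
          fun h => h2 (fitch_symm t lab h)⟩
      · have hbx' : b = x := hx b hbx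
        subst hbx'
        exact ⟨a, ha, hne, h2⟩
  · rintro ⟨z, hz, hzx, hnadj⟩
    refine ⟨z, x, hz, hx, ?_⟩
    intro hiff
    apply hnadj
    apply hiff.mpr
    refine ⟨hzx, v, x, hcov, Or.inr ⟨rfl, rfl⟩, Or.inr (t.le_refl x), ?_⟩
    have hxv : t.le x v := hcov.1
    have hxl : t.le x (t.lca z x) := t.le_lca_right z x
    rcases t.chain x v (t.lca z x) hxv hxl with h | h
    · exact h
    · rcases hcov.2.2 (t.lca z x) hxl h with heq | heq
      · have hzl := t.le_lca_left z x
        rw [heq] at hzl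
        exact absurd (hx z hzl) hzx
      · rw [heq]
        exact t.le_refl _
end
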